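/- Let f be an entire or meromorphic function, and suppose every connected component of f⁻¹(B_ε(b)) is unbounded for all ε > 0, and f is not injective on any such component. If V is a bounded domain with f(V₋₁) = V for some component V₋₁ of f⁻¹(V) on which f is injective, then b ∉ V. -/

import Mathlib

open Set Metric

theorem connectedComponentIn_subset_of_mem {α : Type*} [TopologicalSpace α] {s t : Set α}
    {x y : α} (hst : s ⊆ t) (hx : x ∈ connectedComponentIn t y) :
    connectedComponentIn s x ⊆ connectedComponentIn t y :=
  connectedComponentIn_eq hx ▸ connectedComponentIn_mono x hst

theorem exists_injOn_connectedComponentIn_preimage_ball {X Y : Type*} [TopologicalSpace X]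
    [PseudoMetricSpace Y] {f : X → Y} {V : Set Y} (hV : IsOpen V) {z z₁ : X}
    (hz : z ∈ connectedComponentIn (f ⁻¹' V) z₁)
    (hinj : InjOn f (connectedComponentIn (f ⁻¹' V) z₁)) :
    ∃ ε > 0, InjOn f (connectedComponentIn (f ⁻¹' ball (f z) ε) z) := by
  have hzV : z ∈ f ⁻¹' V := connectedComponentIn_subset _ _ hz
  obtain ⟨ε, hε, hball⟩ := isOpen_iff.1 hV (f z) hzV
  exact ⟨ε, hε, hinj.mono (connectedComponentIn_subset_of_mem (preimage_mono hball) hz)⟩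

theorem statement10_general (f : ℂ → ℂ) (b : ℂ)
    (hpre : ∀ ε > (0 : ℝ), ∀ z ∈ f ⁻¹' Metric.ball b ε,
      ¬ Bornology.IsBounded (connectedComponentIn (f ⁻¹' Metric.ball b ε) z) ∧
      ¬ Set.InjOn f (connectedComponentIn (f ⁻¹' Metric.ball b ε) z))
    (V Vpre : Set ℂ)
    (hVopen : IsOpen V)
    (z₁ : ℂ)
    (hV₁ : Vpre = connectedComponentIn (f ⁻¹' V) z₁)
    (him : f '' Vpre = V) (hinj : Set.InjOn f Vpre) :
    b ∉ V := by
  subst hV₁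
  intro hbV
  obtain ⟨z, hz, rfl⟩ : b ∈ f '' _ := him ▸ hbV
  obtain ⟨ε, hε, hinjε⟩ := exists_injOn_connectedComponentIn_preimage_ball hVopen hz hinj
  exact (hpre ε hε z (mem_ball_self hε)).2 hinjε

/-- Suppose every connected component of `f ⁻¹ (B_ε b)` is unbounded for
every `ε > 0` and `f` is not injective on any such component.  If `V` is a bounded
domain and `Vpre` is a component of `f ⁻¹ V` with `f '' Vpre = V` and `f` injective on
`Vpre`, then `b ∉ V`. -/
theorem statement10 (f : ℂ → ℂ) (b : ℂ)
    (hpre : ∀ ε > (0 : ℝ), ∀ z ∈ f ⁻¹' Metric.ball b ε,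
      ¬ Bornology.IsBounded (connectedComponentIn (f ⁻¹' Metric.ball b ε) z) ∧
      ¬ Set.InjOn f (connectedComponentIn (f ⁻¹' Metric.ball b ε) z))
    (V Vpre : Set ℂ)
    (hVopen : IsOpen V) (hVconn : IsConnected V) (hVbdd : Bornology.IsBounded V)
    (z₁ : ℂ) (hz₁ : z₁ ∈ f ⁻¹' V)
    (hV₁ : Vpre = connectedComponentIn (f ⁻¹' V) z₁)
    (him : f '' Vpre = V) (hinj : Set.InjOn f Vpre) :
    b ∉ V :=
  statement10_general f b hpre V Vpre hVopen z₁ hV₁ him hinj
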